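/- The functions I_j = D^j(t_1/(t-1)), i.e. I_j = t_{j+1}/(t_j - 1) for j ≥ 0, are invariants of the vector field X_1 of the discrete Liouville equation: X_1 I_j = 0 for all j ≥ 0. -/

import Mathlib

/-! Only `t_j` and `t_{j+1}` enter `I_j`, so `X₁ I_j = x_j ∂I_j/∂t_j + x_{j+1} ∂I_j/∂t_{j+1}`,
and the recursion `x_{j+1} = x_j I_j` makes the two terms cancel. -/

open Finset

noncomputable def pd (i : ℕ) (F : (ℕ → ℝ) → ℝ) (t : ℕ → ℝ) : ℝ :=
  deriv (fun s => F (Function.update t i s)) (t i)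

/-- Coefficients of `X₁` for the discrete Liouville equation:
`x₀ = 1`, `x_k = ∏_{i=0}^{k-1} t_{i+1}/(t_i - 1)`. -/
noncomputable def xplus (k : ℕ) : (ℕ → ℝ) → ℝ := fun t => ∏ i ∈ range k, t (i+1) / (t i - 1)

open Function

lemma xplus_succ (k : ℕ) (t : ℕ → ℝ) :
    xplus (k + 1) t = xplus k t * (t (k + 1) / (t k - 1)) :=
  prod_range_succ _ k

lemma pd_eq_of_hasDerivAt {i : ℕ} {F : (ℕ → ℝ) → ℝ} {t : ℕ → ℝ} {f : ℝ → ℝ} {f' : ℝ}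
    (hF : ∀ s, F (update t i s) = f s) (hf : HasDerivAt f f' (t i)) : pd i F t = f' := by
  rw [pd, funext hF, hf.deriv]

section Invariant

variable (j : ℕ) {t : ℕ → ℝ}

lemma pd_invariant_of_ne {i : ℕ} (hj : i ≠ j) (hj' : i ≠ j + 1) :
    pd i (fun s => s (j + 1) / (s j - 1)) t = 0 :=
  pd_eq_of_hasDerivAt (fun s => by rw [update_of_ne hj'.symm, update_of_ne hj.symm])
    (hasDerivAt_const _ _)

lemma pd_invariant_self (ht : t j ≠ 1) :
    pd j (fun s => s (j + 1) / (s j - 1)) t = -(t (j + 1) / (t j - 1) ^ 2) := by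
  have hf := (((hasDerivAt_id (t j)).sub_const 1).inv (sub_ne_zero.mpr ht)).const_mul (t (j + 1))
  refine pd_eq_of_hasDerivAt (fun s => ?_) (hf.congr_deriv ?_)
  · rw [update_of_ne (by omega), update_self, div_eq_mul_inv]
    rfl
  · simp only [id]
    ring

lemma pd_invariant_succ :
    pd (j + 1) (fun s => s (j + 1) / (s j - 1)) t = (t j - 1)⁻¹ :=
  pd_eq_of_hasDerivAt (fun s => by rw [update_self, update_of_ne (by omega)])
    (by simpa using (hasDerivAt_id _).div_const (t j - 1))

end Invariant

/-- The functions `Iⱼ = Dʲ(t₁/(t-1)) = t_{j+1}/(tⱼ - 1)` are invariants of the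
vector field `X₁` of the discrete Liouville equation: `X₁Iⱼ = 0` for `j ≥ 0`
(the sum is finite since `Iⱼ` depends only on `tⱼ, t_{j+1}`). -/
theorem stmt16 :
    ∀ (j : ℕ) (t : ℕ → ℝ), (∀ k, t k ≠ 1) →
      ∑ i ∈ range (j+2), xplus i t * pd i (fun s => s (j+1) / (s j - 1)) t = 0 := by
  intro j t ht
  have h_low : ∑ i ∈ range j, xplus i t * pd i (fun s => s (j+1) / (s j - 1)) t = 0 :=
    sum_eq_zero fun i hi => by
      have hij := mem_range.mp hi
      rw [pd_invariant_of_ne j hij.ne (by omega), mul_zero]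
  rw [sum_range_succ, sum_range_succ, h_low, pd_invariant_self j (ht j), pd_invariant_succ,
    xplus_succ]
  generalize t j - 1 = a
  ring
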